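/- Every finite skew left brace of square-free order has weight one. -/

import Mathlib

section GroupAux

universe u

open Subgroup

/-- Groups of squarefree order are solvable (via Burnside's normal `p`-complement theorem). -/
theorem isSolvable_of_squarefree_card_aux :
    ∀ n : ℕ, ∀ (G : Type u) [Group G] [Finite G],
      Nat.card G = n → Squarefree n → Group.IsSolvable G := by
  intro n
  induction n using Nat.strong_induction_on with
  | _ n ih =>
    intro G _ _ hcard hsq
    rcases eq_or_ne n 1 with h1 | h1
    · subst h1
      haveI := (Nat.card_eq_one_iff_unique.mp hcard).1
      infer_instance
    · have hn0 : n ≠ 0 := hsq.ne_zero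
      set p := n.minFac with hp_def
      have hp : p.Prime := Nat.minFac_prime h1
      haveI : Fact p.Prime := ⟨hp⟩
      obtain ⟨P⟩ : Nonempty (Sylow p G) := inferInstance
      have hdvd : p ∣ n := Nat.minFac_dvd n
      have hcardP : Nat.card P = p := by
        rw [Sylow.card_eq_multiplicity, hcard,
          Nat.factorization_eq_one_of_squarefree hsq hp hdvd, pow_one]
      have hpm1 : 1 ≤ p - 1 := by have := hp.two_le; omega
      have hcop : ∀ m : ℕ, m ∣ n → m ∣ p - 1 → m = 1 := by
        intro m hmn hmp
        by_contra hm1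
        have hq : m.minFac.Prime := Nat.minFac_prime hm1
        have hq_n : m.minFac ∣ n := (Nat.minFac_dvd m).trans hmn
        have hq_p : m.minFac ∣ p - 1 := (Nat.minFac_dvd m).trans hmp
        have h1' : p ≤ m.minFac := Nat.minFac_le_of_dvd hq.two_le hq_n
        have h2' : m.minFac ≤ p - 1 := Nat.le_of_dvd (by omega) hq_p
        have := hp.two_le
        omega
      have hNC : Subgroup.normalizer ((P : Subgroup G) : Set G) ≤ Subgroup.centralizer (P : Set G) := by
        intro x hx
        set y : (Subgroup.normalizer ((P : Subgroup G) : Set G) : Subgroup G) := ⟨x, hx⟩ with hy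
        set φ := Subgroup.normalizerMonoidHom (P : Subgroup G) with hφ
        haveI : IsCyclic ((P : Subgroup G) : Subgroup G) := isCyclic_of_prime_card hcardP
        have hMA : Nat.card (MulAut ((P : Subgroup G))) = p - 1 := by
          rw [IsCyclic.card_mulAut, hcardP, Nat.totient_prime hp]
        have hd1 : orderOf (φ y) ∣ p - 1 := hMA ▸ orderOf_dvd_natCard (φ y)
        have hd2 : orderOf (φ y) ∣ n := by
          refine dvd_trans (orderOf_map_dvd φ y) ?_
          refine dvd_trans (orderOf_dvd_natCard y) ?_
          exact hcard ▸ Subgroup.card_subgroup_dvd_card _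
        have h1'' : orderOf (φ y) = 1 := hcop _ hd2 hd1
        have hker : y ∈ φ.ker := by
          rw [MonoidHom.mem_ker, ← orderOf_eq_one_iff.mp h1'']
        rw [hφ, Subgroup.normalizerMonoidHom_ker, Subgroup.mem_subgroupOf] at hker
        exact hker
      set K : Subgroup G := (MonoidHom.transferSylow P hNC).ker with hK
      have hcomp : K.IsComplement' (P : Subgroup G) := MonoidHom.ker_transferSylow_isComplement' P hNC
      have hmul : Nat.card K * p = n := by
        rw [← hcardP, ← hcard]; exact hcomp.card_mul
      have hKdvd : Nat.card K ∣ n := Dvd.intro p hmul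
      have hKpos : 0 < Nat.card K := Nat.pos_of_ne_zero (by
        intro h0; rw [h0, zero_mul] at hmul; exact hn0 hmul.symm)
      have hKlt : Nat.card K < n := by
        have := hp.two_le; nlinarith [hmul]
      haveI : Group.IsSolvable K := ih _ hKlt K rfl (hsq.squarefree_of_dvd hKdvd)
      have hquot : Nat.card (G ⧸ K) = p := by
        have h2 : Nat.card (G ⧸ K) * Nat.card K = n :=
          (Subgroup.card_eq_card_quotient_mul_card_subgroup K).symm.trans hcard
        have h3 : p * Nat.card K = n := (mul_comm _ _).trans hmul
        exact Nat.eq_of_mul_eq_mul_right hKpos (h2.trans h3.symm)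
      haveI : Group.IsSolvable (G ⧸ K) := by
        haveI : IsCyclic (G ⧸ K) := isCyclic_of_prime_card hquot
        letI : CommGroup (G ⧸ K) := IsCyclic.commGroup
        infer_instance
      exact solvable_of_ker_le_range K.subtype (QuotientGroup.mk' K)
        (by rw [QuotientGroup.ker_mk', Subgroup.range_subtype])

theorem isCyclic_of_squarefree_card_comm (Q : Type*) [CommGroup Q] [Finite Q]
    (h : Squarefree (Nat.card Q)) : IsCyclic Q := by
  apply IsCyclic.of_exponent_eq_card
  refine Nat.dvd_antisymm Group.exponent_dvd_nat_card ?_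
  rw [Nat.dvd_iff_prime_pow_dvd_dvd]
  intro q k hq hdvd
  have hn0 : Nat.card Q ≠ 0 := h.ne_zero
  have hk : k ≤ 1 := by
    have := (Nat.Prime.pow_dvd_iff_le_factorization hq hn0).mp hdvd
    have h2 := (Nat.squarefree_iff_factorization_le_one hn0).mp h q
    omega
  interval_cases k
  · simp
  · haveI : Fact q.Prime := ⟨hq⟩
    obtain ⟨x, hx⟩ := exists_prime_orderOf_dvd_card' (G := Q) q (by simpa using hdvd)
    simpa [hx] using Monoid.order_dvd_exponent x

theorem subsingleton_of_commutator_eq_top (G : Type*) [Group G] [hs : Group.IsSolvable G]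
    (h : commutator G = ⊤) : Subsingleton G := by
  have key : ∀ n, derivedSeries G n = ⊤ := by
    intro n
    induction n with
    | zero => exact derivedSeries_zero G
    | succ n ihn => rw [derivedSeries_succ, ihn]; exact h
  obtain ⟨n, hn⟩ := hs.solvable
  have htb : (⊤ : Subgroup G) = ⊥ := by rw [← key n, hn]
  refine ⟨fun a b => ?_⟩
  have ha : a ∈ (⊥ : Subgroup G) := htb ▸ Subgroup.mem_top a
  have hb : b ∈ (⊥ : Subgroup G) := htb ▸ Subgroup.mem_top b
  rw [Subgroup.mem_bot] at ha hb
  rw [ha, hb]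

/-- In a finite solvable group, a normal subgroup containing an element whose image
generates the abelianization is the whole group. -/
theorem normal_eq_top_of_abelianization_generator {G : Type*} [Group G] [Finite G] [Group.IsSolvable G]
    (N : Subgroup G) [N.Normal] (g : G) (hg : g ∈ N)
    (hgen : ∀ x : Abelianization G, x ∈ Subgroup.zpowers (Abelianization.of g)) :
    N = ⊤ := by
  have hcomm : commutator (G ⧸ N) = ⊤ := by
    rw [eq_top_iff]
    intro y _
    obtain ⟨x, rfl⟩ := QuotientGroup.mk'_surjective N y
    obtain ⟨k, hk⟩ := hgen (Abelianization.of x)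
    have hk' : Abelianization.of g ^ k = Abelianization.of x := hk
    have hx : x * (g ^ k)⁻¹ ∈ commutator G := by
      rw [← QuotientGroup.eq_one_iff (N := commutator G)]
      show Abelianization.of (x * (g ^ k)⁻¹) = 1
      rw [map_mul, map_inv, map_zpow, hk', mul_inv_cancel]
    have hmap : (QuotientGroup.mk' N) (x * (g ^ k)⁻¹) ∈ commutator (G ⧸ N) := by
      have := Subgroup.map_commutator (H₁ := (⊤ : Subgroup G)) (H₂ := ⊤) (QuotientGroup.mk' N)
      have hle : Subgroup.map (QuotientGroup.mk' N) (commutator G) ≤ commutator (G ⧸ N) := by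
        rw [_root_.commutator_def, this]
        exact Subgroup.commutator_mono le_top le_top
      exact hle (Subgroup.mem_map_of_mem _ hx)
    have hgk : (QuotientGroup.mk' N) (g ^ k) = 1 :=
      (QuotientGroup.eq_one_iff _).mpr (N.zpow_mem hg k)
    have : (QuotientGroup.mk' N) x =
        (QuotientGroup.mk' N) (x * (g ^ k)⁻¹) := by
      rw [map_mul, map_inv, hgk, inv_one, mul_one]
    rw [this]
    exact hmap
  haveI : Subsingleton (G ⧸ N) := subsingleton_of_commutator_eq_top _ hcomm
  rw [eq_top_iff]
  intro x _
  rw [← QuotientGroup.eq_one_iff (N := N)]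
  exact Subsingleton.elim _ _

end GroupAux


/-- A skew left brace: `(A,+)` and `(A,∘)` (written `*`) are groups with
`a ∘ (b + c) = a ∘ b - a + a ∘ c`. -/
class SkewBrace (A : Type*) extends AddGroup A, Group A where
  compat : ∀ a b c : A, a * (b + c) = a * b + (-a + a * c)

namespace SkewBrace

variable {A : Type*}

/-- `λ_a (b) = -a + a ∘ b`. -/
def lam [SkewBrace A] (a b : A) : A := -a + a * b

/-- `a * b = λ_a(b) - b = -a + a∘b - b` (the brace star operation). -/
def star [SkewBrace A] (a b : A) : A := -a + a * b - b

/-- An ideal of a skew left brace: a subgroup of `(A,+)`, normal in `(A,+)` and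
`(A,∘)`, and invariant under all `λ_a`. -/
structure Ideal (A : Type*) [SkewBrace A] where
  carrier : Set A
  zero_mem : (0 : A) ∈ carrier
  add_mem : ∀ ⦃a b : A⦄, a ∈ carrier → b ∈ carrier → a + b ∈ carrier
  neg_mem : ∀ ⦃a : A⦄, a ∈ carrier → -a ∈ carrier
  add_conj_mem : ∀ (a : A) ⦃b : A⦄, b ∈ carrier → a + b + -a ∈ carrier
  mul_conj_mem : ∀ (a : A) ⦃b : A⦄, b ∈ carrier → a * b * a⁻¹ ∈ carrier
  lam_mem : ∀ (a : A) ⦃b : A⦄, b ∈ carrier → lam a b ∈ carrier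

/-- The ideal generated by a set, as a set. -/
def genIdeal [SkewBrace A] (S : Set A) : Set A :=
  {x | ∀ I : Ideal A, S ⊆ I.carrier → x ∈ I.carrier}

/-- A maximal ideal: a proper ideal such that the only ideals containing it are
itself and the whole brace. -/
def Ideal.IsMaximal [SkewBrace A] (M : Ideal A) : Prop :=
  M.carrier ≠ Set.univ ∧
    ∀ J : Ideal A, M.carrier ⊆ J.carrier → J.carrier = M.carrier ∨ J.carrier = Set.univ

/-- The radical: the intersection of all maximal ideals (the whole brace if there
are none). -/
def radical (A : Type*) [SkewBrace A] : Set A :=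
  {x | ∀ M : Ideal A, M.IsMaximal → x ∈ M.carrier}

/-- The set of all elements `a * b` (star). -/
def starSet (A : Type*) [SkewBrace A] : Set A := {x | ∃ a b : A, star a b = x}

/-- `A⁽²⁾` as the ideal generated by all `a * b`. -/
def sq (A : Type*) [SkewBrace A] : Set A := genIdeal (starSet A)

/-- `A⁽²⁾` as the additive subgroup generated by all `a * b`. -/
def sqAdd (A : Type*) [SkewBrace A] : Set A := (AddSubgroup.closure (starSet A) : Set A)

open scoped Classical in
/-- The weight of a skew left brace: the minimal number of elements generating it
as an ideal (with `ω(0) = 1` by convention). -/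
noncomputable def weight (A : Type*) [SkewBrace A] : ℕ∞ :=
  if Subsingleton A then 1
  else ⨅ (S : Finset A) (_ : genIdeal (S : Set A) = Set.univ), (S.card : ℕ∞)

/-- Artinian: every descending chain of ideals is eventually stationary. -/
def IsArtinian (A : Type*) [SkewBrace A] : Prop :=
  ∀ f : ℕ → Ideal A, (∀ n, (f (n + 1)).carrier ⊆ (f n).carrier) →
    ∃ N, ∀ n, N ≤ n → (f n).carrier = (f N).carrier

/-- A homomorphism of skew left braces. -/
structure BraceHom (A B : Type*) [SkewBrace A] [SkewBrace B] where
  toFun : A → B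
  map_add' : ∀ x y, toFun (x + y) = toFun x + toFun y
  map_mul' : ∀ x y, toFun (x * y) = toFun x * toFun y

/-- The kernel of a brace homomorphism. -/
def BraceHom.ker {A B : Type*} [SkewBrace A] [SkewBrace B] (f : BraceHom A B) : Set A :=
  {a | f.toFun a = 0}

/-- The socle `Soc(A) = Ker λ ∩ Z(A,+)`. -/
def Soc (A : Type*) [SkewBrace A] : Set A :=
  {a | (∀ b : A, lam a b = b) ∧ ∀ b : A, a + b = b + a}

/-- The annihilator `Ann(A) = Soc(A) ∩ Z(A,∘)`. -/
def ann (A : Type*) [SkewBrace A] : Set A :=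
  {a | (∀ b : A, lam a b = b) ∧ (∀ b : A, a + b = b + a) ∧ (∀ b : A, a * b = b * a)}

/-- A simple skew left brace: it has exactly two ideals, `0` and itself. -/
def IsSimple (A : Type*) [SkewBrace A] : Prop :=
  (∃ x y : A, x ≠ y) ∧ ∀ I : Ideal A, I.carrier = {(0 : A)} ∨ I.carrier = Set.univ

/-- A prime ideal `P`: the quotient `A/P` is a prime brace; internally, for all
ideals `I, J ⊇ P` with `I * J ⊆ P`, one of `I, J` equals `P`. -/
def Ideal.IsPrime [SkewBrace A] (P : Ideal A) : Prop :=
  ∀ I J : Ideal A, P.carrier ⊆ I.carrier → P.carrier ⊆ J.carrier →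
    (∀ i ∈ I.carrier, ∀ j ∈ J.carrier, star i j ∈ P.carrier) →
    I.carrier ⊆ P.carrier ∨ J.carrier ⊆ P.carrier

end SkewBrace


namespace SkewBrace

variable {A : Type*} [SkewBrace A]

lemma mul_zero' (a : A) : a * (0 : A) = a := by
  have h := compat a 0 0
  rw [add_zero] at h
  have h2 : -a + a * 0 = 0 := by
    have := h.symm
    rwa [add_eq_left] at this
  have h3 : a = a * 0 := neg_add_eq_zero.mp h2
  exact h3.symm

lemma one_eq_zero : (1 : A) = (0 : A) := by
  have h1 := mul_zero' (1 : A)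
  rw [one_mul] at h1
  exact h1.symm

lemma lam_zero (a : A) : lam a (0 : A) = 0 := by
  rw [lam, mul_zero', neg_add_cancel]

/-- The trivial ideal `{0}`. -/
def botIdeal (A : Type*) [SkewBrace A] : Ideal A where
  carrier := {0}
  zero_mem := rfl
  add_mem := by
    intro a b ha hb
    rw [Set.mem_singleton_iff] at *
    rw [ha, hb, add_zero]
  neg_mem := by
    intro a ha
    rw [Set.mem_singleton_iff] at *
    rw [ha, neg_zero]
  add_conj_mem := by
    intro a b hb
    rw [Set.mem_singleton_iff] at *
    rw [hb, add_zero, add_neg_cancel]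
  mul_conj_mem := by
    intro a b hb
    rw [Set.mem_singleton_iff] at *
    rw [hb, ← one_eq_zero, mul_one, mul_inv_cancel]
  lam_mem := by
    intro a b hb
    rw [Set.mem_singleton_iff] at *
    rw [hb, lam_zero]

lemma Ideal.mul_mem' (I : Ideal A) {a b : A} (ha : a ∈ I.carrier) (hb : b ∈ I.carrier) :
    a * b ∈ I.carrier := by
  have h := I.add_mem ha (I.lam_mem a hb)
  rwa [lam, add_neg_cancel_left] at h

lemma Ideal.inv_mem' (I : Ideal A) {a : A} (ha : a ∈ I.carrier) : a⁻¹ ∈ I.carrier := by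
  have h := I.lam_mem a⁻¹ ha
  rw [lam, inv_mul_cancel, one_eq_zero, add_zero] at h
  have h2 := I.neg_mem h
  rwa [neg_neg] at h2

/-- An ideal as a subgroup of the multiplicative group. -/
def Ideal.toSubgroup (I : Ideal A) : Subgroup A where
  carrier := I.carrier
  one_mem' := one_eq_zero (A := A) ▸ I.zero_mem
  mul_mem' := fun ha hb => I.mul_mem' ha hb
  inv_mem' := fun ha => I.inv_mem' ha

lemma Ideal.toSubgroup_normal (I : Ideal A) : I.toSubgroup.Normal :=
  ⟨fun _ hn g => I.mul_conj_mem g hn⟩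

end SkewBrace

open SkewBrace in
/-- a finite skew left brace of square-free order has weight one. -/
theorem squarefree_weight_one (A : Type*) [SkewBrace A] [Fintype A]
    (h : Squarefree (Fintype.card A)) :
    weight A = 1 := by
  classical
  by_cases hsub : Subsingleton A
  · rw [weight, if_pos hsub]
  · rw [weight, if_neg hsub]
    have hnt : Nontrivial A := not_subsingleton_iff_nontrivial.mp hsub
    have hcard : Nat.card A = Fintype.card A := Nat.card_eq_fintype_card
    haveI hsolv : Group.IsSolvable A :=
      isSolvable_of_squarefree_card_aux (Nat.card A) A rfl (hcard ▸ h)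
    have hQsq : Squarefree (Nat.card (Abelianization A)) :=
      Squarefree.squarefree_of_dvd
        (hcard ▸ Subgroup.card_quotient_dvd_card (commutator A)) h
    haveI : IsCyclic (Abelianization A) := isCyclic_of_squarefree_card_comm _ hQsq
    obtain ⟨q, hq⟩ := IsCyclic.exists_generator (α := Abelianization A)
    have hofsurj : Function.Surjective (Abelianization.of (G := A)) := fun y =>
      Quotient.inductionOn y fun g => ⟨g, rfl⟩
    obtain ⟨g, rfl⟩ := hofsurj q
    have key : ∀ I : Ideal A, g ∈ I.carrier → I.carrier = Set.univ := by
      intro I hgI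
      haveI := I.toSubgroup_normal
      have htop : I.toSubgroup = ⊤ :=
        normal_eq_top_of_abelianization_generator I.toSubgroup g hgI hq
      have : ∀ x : A, x ∈ I.carrier := by
        intro x
        have : x ∈ I.toSubgroup := htop ▸ Subgroup.mem_top x
        exact this
      exact Set.eq_univ_of_forall this
    refine le_antisymm ?_ ?_
    · have hgen : genIdeal ((({g} : Finset A) : Set A)) = Set.univ := by
        refine Set.eq_univ_of_forall fun x => ?_
        intro I hI
        have hgI : g ∈ I.carrier := hI (by simp)
        rw [key I hgI]; trivial
      refine iInf_le_of_le ({g} : Finset A) (iInf_le_of_le hgen ?_)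
      simp
    · refine le_iInf fun S => le_iInf fun hS => ?_
      have hSne : S ≠ ∅ := by
        rintro rfl
        have h0 : ∀ x : A, x ∈ (botIdeal A).carrier := by
          intro x
          have hx : x ∈ genIdeal (((∅ : Finset A) : Set A)) := by
            rw [hS]; trivial
          exact hx (botIdeal A) (by simp)
        obtain ⟨a, b, hab⟩ := hnt
        have ha := h0 a
        have hb := h0 b
        have ha' : a = 0 := ha
        have hb' : b = 0 := hb
        exact hab (ha'.trans hb'.symm)
      have : 1 ≤ S.card := Finset.card_pos.mpr (Finset.nonempty_of_ne_empty hSne)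
      exact_mod_cast this
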